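/- Let (A_t)_{t=0}^T, (B_t)_{t=0}^T be integer staircase sequences, (P_t)_{t=1}^T real prices, and (x̄_t) a feasible 0-1 solution. Let t* ∈ {1,...,T} with x̄_{t*} = 0 and Σ_{i=1}^{t*−1} x̄_i > A_{t*−1}. Let t' = max{t < t* : x̄_t = 1}. Then the sequence (x̂_t) defined by x̂_{t'} = 0, x̂_{t*} = 1, and x̂_t = x̄_t otherwise, is feasible. -/
import Mathlib


def Staircase (T : ℕ) (Z : ℕ → ℤ) : Prop :=
  Z 0 = 0 ∧ ∀ t ∈ Finset.Icc 1 T, Z (t - 1) ≤ Z t ∧ Z t ≤ Z (t - 1) + 1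

def Binary (T : ℕ) (x : ℕ → ℤ) : Prop :=
  ∀ t ∈ Finset.Icc 1 T, x t = 0 ∨ x t = 1

def Feasible (T : ℕ) (A B : ℕ → ℤ) (x : ℕ → ℤ) : Prop :=
  Binary T x ∧ ∀ t ∈ Finset.Icc 1 T,
    A t ≤ ∑ i ∈ Finset.Icc 1 t, x i ∧ ∑ i ∈ Finset.Icc 1 t, x i ≤ B t

noncomputable def cost (T : ℕ) (P : ℕ → ℝ) (x : ℕ → ℤ) : ℝ :=
  ∑ t ∈ Finset.Icc 1 T, P t * (x t : ℝ)

lemma stair_mono {T : ℕ} {Z : ℕ → ℤ} (h : Staircase T Z) :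
    ∀ s t, s ≤ t → t ≤ T → Z s ≤ Z t := by
  intro s t hst htT
  induction t with
  | zero => simp_all
  | succ n ih =>
    rcases Nat.eq_or_lt_of_le hst with rfl | hlt
    · exact le_rfl
    · have h1 : Z n ≤ Z (n + 1) := by
        have := (h.2 (n + 1) (Finset.mem_Icc.mpr ⟨Nat.succ_le_succ (Nat.zero_le n), htT⟩)).1
        simpa using this
      exact le_trans (ih (Nat.lt_succ_iff.mp hlt) (Nat.le_of_succ_le htT)) h1

lemma stair_nonneg {T : ℕ} {Z : ℕ → ℤ} (h : Staircase T Z) {t : ℕ} (ht : t ≤ T) :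
    0 ≤ Z t := by
  have h1 := stair_mono h 0 t (Nat.zero_le t) ht
  have h0 := h.1
  omega

theorem stmt8 (T : ℕ) (A B : ℕ → ℤ) (P : ℕ → ℝ)
    (hA : Staircase T A) (hB : Staircase T B)
    (xb : ℕ → ℤ) (hxb : Feasible T A B xb)
    (ts : ℕ) (hts : ts ∈ Finset.Icc 1 T) (hx0 : xb ts = 0)
    (hsum : A (ts - 1) < ∑ i ∈ Finset.Icc 1 (ts - 1), xb i)
    (t' : ℕ) (ht' : t' = sSup {t : ℕ | t < ts ∧ xb t = 1}) :
    Feasible T A B (fun t => if t = t' then 0 else if t = ts then 1 else xb t) := by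
  obtain ⟨hts1, htsT⟩ := Finset.mem_Icc.mp hts
  obtain ⟨hbin, hfeas⟩ := hxb
  have htsm1T : ts - 1 ≤ T := by omega
  -- the set is nonempty
  have hApos : 0 ≤ A (ts - 1) := stair_nonneg hA htsm1T
  have hsne : (∑ i ∈ Finset.Icc 1 (ts - 1), xb i) ≠ 0 := by omega
  obtain ⟨i, hi, hine⟩ := Finset.exists_ne_zero_of_sum_ne_zero hsne
  obtain ⟨hi1, hi2⟩ := Finset.mem_Icc.mp hi
  have hiT : i ∈ Finset.Icc 1 T := Finset.mem_Icc.mpr ⟨hi1, by omega⟩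
  have hxi1 : xb i = 1 := by have := hbin i hiT; omega
  have hiS : i ∈ {t : ℕ | t < ts ∧ xb t = 1} := ⟨by omega, hxi1⟩
  have hbdd : BddAbove {t : ℕ | t < ts ∧ xb t = 1} := ⟨ts, fun t ht => ht.1.le⟩
  have ht'mem : t' ∈ {t : ℕ | t < ts ∧ xb t = 1} := ht' ▸ Nat.sSup_mem ⟨i, hiS⟩ hbdd
  have ht'lt : t' < ts := ht'mem.1
  have hx1 : xb t' = 1 := ht'mem.2
  have hit' : i ≤ t' := ht' ▸ le_csSup hbdd hiS
  have h1t' : 1 ≤ t' := le_trans hi1 hit'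
  have hmax : ∀ t, t' < t → t < ts → xb t = 0 := by
    intro t h1 h2
    have htT : t ∈ Finset.Icc 1 T := Finset.mem_Icc.mpr ⟨by omega, by omega⟩
    rcases hbin t htT with h | h
    · exact h
    · have : t ≤ t' := ht' ▸ le_csSup hbdd ⟨h2, h⟩
      omega
  have hne' : t' ≠ ts := by omega
  -- sum formula
  have key : ∀ t : ℕ,
      (∑ i ∈ Finset.Icc 1 t, (if i = t' then (0:ℤ) else if i = ts then 1 else xb i))
      = (∑ i ∈ Finset.Icc 1 t, xb i) + (if t' ≤ t then -1 else 0)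
        + (if ts ≤ t then 1 else 0) := by
    intro t
    have hcongr : ∀ j ∈ Finset.Icc 1 t,
        (if j = t' then (0:ℤ) else if j = ts then 1 else xb j)
        = xb j + (if j = t' then -1 else 0) + (if j = ts then 1 else 0) := by
      intro j hj
      by_cases h1 : j = t'
      · subst h1; simp [hne', hx1]
      · by_cases h2 : j = ts
        · subst h2; simp [h1, hx0]
        · simp [h1, h2]
    rw [Finset.sum_congr rfl hcongr]
    rw [Finset.sum_add_distrib, Finset.sum_add_distrib]
    rw [Finset.sum_ite_eq' (Finset.Icc 1 t) t' (fun _ => (-1:ℤ)),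
        Finset.sum_ite_eq' (Finset.Icc 1 t) ts (fun _ => (1:ℤ))]
    simp [Finset.mem_Icc, h1t', hts1]
  constructor
  · intro t ht
    by_cases h1 : t = t'
    · simp [h1]
    · by_cases h2 : t = ts
      · simp only [if_neg h1, if_pos h2]; right; trivial
      · simpa [h1, h2] using hbin t ht
  · intro t ht
    obtain ⟨ht1, htT⟩ := Finset.mem_Icc.mp ht
    simp only []
    rw [key t]
    rcases le_or_gt ts t with hcase | hcase
    · have : t' ≤ t := by omega
      simp only [if_pos this, if_pos hcase]
      have := hfeas t ht
      constructor <;> linarith [this.1, this.2]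
    · rcases le_or_gt t' t with hc2 | hc2
      · simp only [if_pos hc2, if_neg (not_le.mpr hcase)]
        have hub := (hfeas t ht).2
        have hIoc : ∀ n : ℕ, Finset.Icc 1 n = Finset.Ioc 0 n := fun n => Finset.Icc_add_one_left_eq_Ioc 0 n
        have hsplit : (∑ i ∈ Finset.Icc 1 (ts - 1), xb i)
            = (∑ i ∈ Finset.Icc 1 t, xb i) + ∑ i ∈ Finset.Ioc t (ts - 1), xb i := by
          rw [hIoc, hIoc]
          exact (Finset.sum_Ioc_consecutive _ (Nat.zero_le t) (by omega : t ≤ ts - 1)).symm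
        have hzero : (∑ i ∈ Finset.Ioc t (ts - 1), xb i) = 0 := by
          apply Finset.sum_eq_zero
          intro j hj
          obtain ⟨hj1, hj2⟩ := Finset.mem_Ioc.mp hj
          exact hmax j (by omega) (by omega)
        have hAmono : A t ≤ A (ts - 1) := stair_mono hA t (ts - 1) (by omega) htsm1T
        constructor
        · omega
        · linarith
      · simp only [if_neg (not_le.mpr hc2), if_neg (not_le.mpr hcase)]
        have := hfeas t ht
        constructor <;> linarith [this.1, this.2]
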